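/- arXiv:2507.13613 — 2 statements merged into one kernel-verified Lean document; each statement's English description precedes it below -/
import Mathlib

section
/- Let (s⁽¹⁾, …, s⁽ᴺ⁺¹⁾) be exchangeable real-valued random variables. Fix α ∈ (0,1) and let j_α = ⌈(N+1)(1-α)⌉ with j_α ≤ N. Then Pr[ s⁽ᴺ⁺¹⁾ ≤ s_{(j_α)} ] ≥ 1 - α, where s_{(j_α)} denotes the j_α-th smallest value among s⁽¹⁾, …, s⁽ᴺ⁾. -/
/-!
Call the score `s k` *covered* when fewer than `j` of the `N + 1` scores lie strictly below
it; `s (last N)` is at most the `j`-th smallest calibration score exactly when it is covered.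
In every outcome at least `j` scores are covered (everything strictly below the smallest
uncovered score is covered), and by exchangeability every score is covered with the same
probability `p`. Hence `j ≤ (N + 1) p`, and `j ≥ (N + 1) (1 - α)` gives `p ≥ 1 - α`.
-/

open MeasureTheory Set Finset
open scoped ENNReal

/-- The `j`-th smallest value (1-indexed) of a list of reals. -/
noncomputable def orderStat (l : List ℝ) (j : ℕ) : ℝ :=
  (l.insertionSort (· ≤ ·)).getD (j - 1) 0

theorem List.SortedLE.le_getElem_iff_countP_le {α : Type*} [LinearOrder α] {l : List α}
    (hl : l.SortedLE) {j : ℕ} (hj : j < l.length) (t : α) :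
    t ≤ l[j] ↔ l.countP (· < t) ≤ j := by
  constructor
  · intro htj
    have hdrop : (l.drop j).countP (· < t) = 0 := by
      refine List.countP_eq_zero.2 fun a ha => ?_
      obtain ⟨i, hi, rfl⟩ := List.mem_drop_iff_getElem.1 ha
      simpa using htj.trans (hl.getElem_le_getElem_of_le (Nat.le_add_right j i))
    calc l.countP (· < t) = (l.take j).countP (· < t) + (l.drop j).countP (· < t) := by
          rw [← List.countP_append, List.take_append_drop]
      _ ≤ j := by
          rw [hdrop, add_zero]
          exact List.countP_le_length.trans (List.length_take_le j l)
  · intro hcount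
    by_contra! hjt
    have htake : (l.take (j + 1)).countP (· < t) = j + 1 := by
      rw [List.countP_eq_length.2 fun a ha => ?_, List.length_take, min_eq_left hj]
      obtain ⟨i, hi, rfl⟩ := List.mem_take_iff_getElem.1 ha
      simpa using (hl.getElem_le_getElem_of_le (by omega)).trans_lt hjt
    have := (List.take_sublist (j + 1) l).countP_le (p := (· < t))
    omega

theorem List.countP_ofFn {α : Type*} {n : ℕ} (f : Fin n → α) (p : α → Prop)
    [DecidablePred p] :
    (List.ofFn f).countP (fun a => decide (p a)) = #{i | p (f i)} := by
  rw [← Multiset.coe_countP, ← Fin.univ_val_map, Multiset.countP_map, Finset.card_def,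
    Finset.filter_val]

theorem le_orderStat_iff_countP_lt {l : List ℝ} {j : ℕ} (hj₁ : 1 ≤ j) (hjl : j ≤ l.length)
    (t : ℝ) : t ≤ orderStat l j ↔ l.countP (· < t) < j := by
  have hlen : j - 1 < (l.insertionSort (· ≤ ·)).length := by
    rw [List.length_insertionSort]; omega
  rw [orderStat, List.getD_eq_getElem _ _ hlen,
    List.sortedLE_insertionSort.le_getElem_iff_countP_le hlen,
    (List.perm_insertionSort _ l).countP_eq]
  omega

section StrictRank

variable {ι α : Type*} [Fintype ι] [LinearOrder α]

def strictRank (x : ι → α) (k : ι) : ℕ := #{i | x i < x k}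

theorem strictRank_comp_perm (x : ι → α) (σ : Equiv.Perm ι) (k : ι) :
    strictRank (x ∘ σ) k = strictRank x (σ k) := by
  simp only [strictRank, Function.comp_apply]
  exact Finset.card_equiv σ (by simp)

theorem le_card_filter_strictRank_lt (x : ι → α) {j : ℕ} (hj : j ≤ Fintype.card ι) :
    j ≤ #{k | strictRank x k < j} := by
  by_cases hall : ∀ k, strictRank x k < j
  · simpa [hall] using hj
  simp only [not_forall, not_lt] at hall
  obtain ⟨k₀, hk₀, hmin⟩ := Finset.exists_min_image {k | j ≤ strictRank x k} x
    (by simpa [Finset.filter_nonempty_iff] using hall)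
  calc j ≤ strictRank x k₀ := (Finset.mem_filter.1 hk₀).2
    _ ≤ #{k | strictRank x k < j} := by
      refine Finset.card_le_card fun i hi => ?_
      simp only [Finset.mem_filter, Finset.mem_univ, true_and] at hi ⊢
      by_contra! hbad
      exact (hmin i (by simpa using hbad)).not_gt hi

variable [MeasurableSpace α] [TopologicalSpace α] [OpensMeasurableSpace α]
  [OrderClosedTopology α] [SecondCountableTopology α]

theorem measurableSet_strictRank_lt (k : ι) (j : ℕ) :
    MeasurableSet {x : ι → α | strictRank x k < j} := by
  have : Measurable fun x : ι → α => strictRank x k := by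
    simp only [strictRank, Finset.card_filter]
    exact Finset.measurable_sum _ fun i _ => Measurable.ite
      (measurableSet_lt (measurable_pi_apply i) (measurable_pi_apply k))
      measurable_const measurable_const
  exact this (measurableSet_Iio (a := j))

end StrictRank

theorem last_le_orderStat_iff {N j : ℕ} (x : Fin (N + 1) → ℝ) (hj₁ : 1 ≤ j)
    (hjN : j ≤ N) :
    x (Fin.last N) ≤ orderStat (List.ofFn fun i : Fin N => x i.castSucc) j ↔
      strictRank x (Fin.last N) < j := by
  rw [le_orderStat_iff_countP_lt hj₁ (by simpa using hjN), strictRank,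
    ← List.countP_ofFn x (· < x (Fin.last N)),
    List.ofFn_succ', List.concat_eq_append, List.countP_append]
  simp

open scoped Classical in
theorem natCast_mul_measure_univ_le_sum_measure {Ω ι : Type*} [MeasurableSpace Ω] [Fintype ι]
    (μ : Measure Ω) {E : ι → Set Ω} (hE : ∀ k, MeasurableSet (E k)) {j : ℕ}
    (hcover : ∀ ω, j ≤ #{k | ω ∈ E k}) :
    j * μ univ ≤ ∑ k, μ (E k) :=
  calc j * μ univ = ∫⁻ _, (j : ℝ≥0∞) ∂μ := by rw [lintegral_const, mul_comm]
    _ ≤ ∫⁻ ω, ∑ k, (E k).indicator 1 ω ∂μ := lintegral_mono fun ω => by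
        simp only [Set.indicator_apply, Pi.one_apply, Finset.sum_boole]
        exact_mod_cast hcover ω
    _ = ∑ k, μ (E k) := by
        rw [lintegral_finsetSum _ fun k _ => measurable_one.indicator (hE k)]
        exact Finset.sum_congr rfl fun k _ => lintegral_indicator_one (hE k)

section Exchangeable

variable {ι α : Type*} [Fintype ι] [DecidableEq ι] [LinearOrder α] [MeasurableSpace α]
  [TopologicalSpace α] [OpensMeasurableSpace α] [OrderClosedTopology α]
  [SecondCountableTopology α]
  {ν : Measure (ι → α)}

theorem measure_strictRank_lt_eq (hν : ∀ σ : Equiv.Perm ι, ν.map (fun x => x ∘ σ) = ν)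
    (k k' : ι) (j : ℕ) :
    ν {x | strictRank x k < j} = ν {x | strictRank x k' < j} := by
  have hpre : (fun x : ι → α => x ∘ Equiv.swap k k') ⁻¹' {x | strictRank x k' < j} =
      {x | strictRank x k < j} := by
    ext x
    simp [strictRank_comp_perm]
  have hσ : Measurable fun x : ι → α => x ∘ Equiv.swap k k' := by fun_prop
  rw [← hpre, ← Measure.map_apply hσ (measurableSet_strictRank_lt k' j), hν]

theorem natCast_le_card_mul_measure_strictRank_lt [IsProbabilityMeasure ν]
    (hν : ∀ σ : Equiv.Perm ι, ν.map (fun x => x ∘ σ) = ν) (k : ι) {j : ℕ}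
    (hj : j ≤ Fintype.card ι) :
    j ≤ Fintype.card ι * ν {x | strictRank x k < j} := by
  have hsum := natCast_mul_measure_univ_le_sum_measure ν
    (fun k' => measurableSet_strictRank_lt (α := α) k' j)
    fun x => by simpa only [Set.mem_ofPred_eq] using le_card_filter_strictRank_lt x hj
  simpa [measure_strictRank_lt_eq hν _ k] using hsum

end Exchangeable

theorem ENNReal.ofReal_le_of_natCast_mul_le {a : ℝ} {p : ℝ≥0∞} {n j : ℕ} (hn : n ≠ 0)
    (ha : n * a ≤ j) (hj : (j : ℝ≥0∞) ≤ n * p) : ENNReal.ofReal a ≤ p := by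
  refine (ENNReal.mul_le_mul_iff_right (by exact_mod_cast hn) (ENNReal.natCast_ne_top n)).1 ?_
  calc n * ENNReal.ofReal a = ENNReal.ofReal (n * a) := by
        rw [ENNReal.ofReal_mul (Nat.cast_nonneg n), ENNReal.ofReal_natCast]
    _ ≤ j := by simpa using ENNReal.ofReal_le_ofReal ha
    _ ≤ n * p := hj

theorem conformal_coverage_exchangeable_general
    {Ω : Type*} [MeasurableSpace Ω] (μ : Measure Ω) [IsProbabilityMeasure μ]
    (N : ℕ) (s : Fin (N + 1) → Ω → ℝ)
    (hmeas : ∀ i, Measurable (s i))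
    (hexch : ∀ σ : Equiv.Perm (Fin (N + 1)),
      Measure.map (fun ω => fun i => s (σ i) ω) μ =
        Measure.map (fun ω => fun i => s i ω) μ)
    (α : ℝ) (hα : α ∈ Set.Ioo (0:ℝ) 1)
    (jα : ℕ) (hjα : jα = ⌈((N : ℝ) + 1) * (1 - α)⌉₊) (hjN : jα ≤ N) :
    ENNReal.ofReal (1 - α) ≤
      μ {ω | s (Fin.last N) ω ≤
        orderStat (List.ofFn (fun i : Fin N => s i.castSucc ω)) jα} := by
  set S : Ω → Fin (N + 1) → ℝ := fun ω i => s i ω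
  have hS : Measurable S := measurable_pi_lambda _ hmeas
  have hν (σ : Equiv.Perm (Fin (N + 1))) : (μ.map S).map (fun x => x ∘ σ) = μ.map S := by
    rw [Measure.map_map (by fun_prop) hS]
    exact hexch σ
  have : IsProbabilityMeasure (μ.map S) := Measure.isProbabilityMeasure_map hS.aemeasurable
  have hj₁ : 1 ≤ jα := by
    rw [hjα, Nat.one_le_iff_ne_zero, ← pos_iff_ne_zero, Nat.ceil_pos]
    nlinarith [hα.2]
  have hevent :
      {ω | s (Fin.last N) ω ≤ orderStat (List.ofFn fun i : Fin N => s i.castSucc ω) jα} =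
        S ⁻¹' {x | strictRank x (Fin.last N) < jα} := by
    ext ω
    exact last_le_orderStat_iff (S ω) hj₁ hjN
  rw [hevent, ← Measure.map_apply hS (measurableSet_strictRank_lt _ _)]
  refine ENNReal.ofReal_le_of_natCast_mul_le (n := N + 1) (Nat.succ_ne_zero N) ?_
    (by simpa using natCast_le_card_mul_measure_strictRank_lt hν (Fin.last N) (by simp; omega))
  push_cast
  exact hjα ▸ Nat.le_ceil _

/-- Split conformal prediction coverage lemma under exchangeability. -/
theorem conformal_coverage_exchangeable
    {Ω : Type*} [MeasurableSpace Ω] (μ : Measure Ω) [IsProbabilityMeasure μ]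
    (N : ℕ) (hN : 0 < N) (s : Fin (N + 1) → Ω → ℝ)
    (hmeas : ∀ i, Measurable (s i))
    (hexch : ∀ σ : Equiv.Perm (Fin (N + 1)),
      Measure.map (fun ω => fun i => s (σ i) ω) μ =
        Measure.map (fun ω => fun i => s i ω) μ)
    (α : ℝ) (hα : α ∈ Set.Ioo (0:ℝ) 1)
    (jα : ℕ) (hjα : jα = ⌈((N : ℝ) + 1) * (1 - α)⌉₊) (hjN : jα ≤ N) :
    ENNReal.ofReal (1 - α) ≤
      μ {ω | s (Fin.last N) ω ≤
        orderStat (List.ofFn (fun i : Fin N => s i.castSucc ω)) jα} :=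
  conformal_coverage_exchangeable_general μ N s hmeas hexch α hα jα hjα hjN
end

section
/- Let (s⁽¹⁾, …, s⁽ᴺ⁺¹⁾) be i.i.d. real-valued random variables with continuous distribution, α ∈ (0,1), and j_α = ⌈(N+1)(1-α)⌉ ≤ N. Then Pr[ s⁽ᴺ⁺¹⁾ ≤ s_{(j_α)} ] = j_α/(N+1), which lies in [1-α, 1-α+1/(N+1)). -/
open MeasureTheory Set ProbabilityTheory

/-!
By independence the score vector has law `ν^⊗(N+1)`, which is invariant under permutations of
the coordinates, so the rank of the test score (the number of scores strictly below it) has the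
same law as the rank of every other score. As `ν` has no atoms there are almost surely no ties,
so the ranks are a permutation of `0, …, N` and exactly `j` of them are `< j`; summing over the
coordinates gives `(N+1) · Pr[rank < j] = j`. Finally, `s⁽ᴺ⁺¹⁾ ≤ s_(j)` holds iff fewer
than `j` calibration scores lie strictly below `s⁽ᴺ⁺¹⁾`.
-/

open Finset

theorem List.SortedLE.getElem_lt_iff_lt_countP {α : Type*} [LinearOrder α] {m : List α}
    (hm : m.SortedLE) {k : ℕ} (hk : k < m.length) (a : α) :
    m[k] < a ↔ k < m.countP (· < a) := by
  constructor
  · intro h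
    have hall : ∀ b ∈ m.take (k + 1), b < a := by
      intro b hb
      obtain ⟨i, hi, rfl⟩ := List.mem_iff_getElem.1 hb
      rw [List.getElem_take]
      exact (hm.getElem_le_getElem_of_le (by simp at hi; omega)).trans_lt h
    calc k < (m.take (k + 1)).countP (· < a) := by
          rw [List.countP_eq_length.2 (by simpa using hall)]; simp; omega
      _ ≤ m.countP (· < a) := (List.take_sublist _ _).countP_le
  · intro h
    by_contra! hak
    have hdrop : (m.drop k).countP (· < a) = 0 := by
      rw [List.countP_eq_zero]
      intro b hb
      obtain ⟨i, hi, rfl⟩ := List.mem_iff_getElem.1 hb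
      rw [List.getElem_drop]
      simpa using hak.trans (hm.getElem_le_getElem_of_le (by omega))
    have htake : (m.take k).countP (· < a) ≤ k := List.countP_le_length.trans (by simp)
    have hsplit := List.take_append_drop k m ▸
      List.countP_append (l₁ := m.take k) (l₂ := m.drop k) (p := (· < a))
    omega

theorem le_orderStat_iff (l : List ℝ) (a : ℝ) {j : ℕ} (hj : 1 ≤ j) (hjl : j ≤ l.length) :
    a ≤ orderStat l j ↔ l.countP (· < a) < j := by
  have hlen : j - 1 < (l.insertionSort (· ≤ ·)).length := by
    rw [List.length_insertionSort]; omega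
  rw [orderStat, List.getD_eq_getElem _ _ hlen, ← not_lt,
    List.sortedLE_insertionSort.getElem_lt_iff_lt_countP hlen,
    (List.perm_insertionSort _ l).countP_eq]
  omega

section Rank

variable {α : Type*} [LinearOrder α]

def rank {ι : Type*} [Fintype ι] (x : ι → α) (i : ι) : ℕ :=
  #{j | x j < x i}

theorem rank_comp_equiv {ι ι' : Type*} [Fintype ι] [Fintype ι'] (x : ι → α) (e : ι' ≃ ι)
    (i : ι') : rank (x ∘ e) i = rank x (e i) :=
  card_equiv e (by simp)

theorem rank_comp_sort {n : ℕ} {x : Fin n → α} (hx : Function.Injective x) (k : Fin n) :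
    rank x (Tuple.sort x k) = k := by
  have hmono : StrictMono (x ∘ Tuple.sort x) :=
    (Tuple.monotone_sort x).strictMono_of_injective (hx.comp (Tuple.sort x).injective)
  rw [← rank_comp_equiv, rank]
  simp only [hmono.lt_iff_lt, filter_gt_eq_Iio, Fin.card_Iio]

theorem card_rank_lt {n : ℕ} {x : Fin n → α} (hx : Function.Injective x) (t : ℕ) :
    #{i | rank x i < t} = min n t := by
  rw [← Fin.card_filter_val_lt]
  exact card_equiv (Tuple.sort x).symm (by simp [← rank_comp_sort hx])

theorem rank_last_eq_countP {n : ℕ} (x : Fin (n + 1) → α) :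
    rank x (Fin.last n) =
      (List.ofFn fun i : Fin n => x i.castSucc).countP (· < x (Fin.last n)) := by
  rw [List.ofFn_eq_map, List.countP_map, Function.comp_def,
    ← (List.nodup_finRange n).card_eq_countP (P := fun i => x i.castSucc < x (Fin.last n)),
    List.toFinset_finRange, rank, card_filter, card_filter, Fin.sum_univ_castSucc]
  simp

end Rank

theorem ProbabilityTheory.IndepFun.measure_eq_eq_zero {Ω α : Type*} [MeasurableSpace Ω]
    [MeasurableSpace α] [MeasurableEq α] {μ : Measure Ω} [IsFiniteMeasure μ] {X Y : Ω → α}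
    (hXY : IndepFun X Y μ) (hX : AEMeasurable X μ) (hY : AEMeasurable Y μ)
    [NullSingletonClass (μ.map Y)] : μ {ω | X ω = Y ω} = 0 := by
  have hdiag : MeasurableSet {p : α × α | p.1 = p.2} := measurableSet_diagonal
  calc μ {ω | X ω = Y ω} = μ.map (fun ω => (X ω, Y ω)) {p | p.1 = p.2} :=
        (Measure.map_apply_of_aemeasurable (hX.prodMk hY) hdiag).symm
    _ = ∫⁻ x, μ.map Y {x} ∂μ.map X := by
        rw [(indepFun_iff_map_prod_eq_prod_map_map hX hY).1 hXY, Measure.prod_apply hdiag]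
        refine lintegral_congr fun x => congrArg _ ?_
        ext y
        simp [eq_comm]
    _ = 0 := by simp

theorem ae_injective_pi {ι α : Type*} [Fintype ι] [MeasurableSpace α] [MeasurableEq α]
    (ν : Measure α) [IsProbabilityMeasure ν] [NullSingletonClass ν] :
    ∀ᵐ x ∂Measure.pi (fun _ : ι => ν), Function.Injective x := by
  have hcoord : iIndepFun (fun i (x : ι → α) => x i) (Measure.pi fun _ => ν) :=
    iIndepFun_pi (X := fun _ => id) fun _ => aemeasurable_id
  have hne : ∀ i j, ∀ᵐ x ∂Measure.pi (fun _ : ι => ν), x i = x j → i = j := by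
    intro i j
    by_cases hij : i = j
    · exact Filter.Eventually.of_forall fun _ _ => hij
    have : NullSingletonClass ((Measure.pi fun _ : ι => ν).map fun x => x j) := by
      rw [(measurePreserving_eval _ j).map_eq]; infer_instance
    refine ae_iff.2 (measure_mono_null (fun x hx => ?_)
      ((hcoord.indepFun hij).measure_eq_eq_zero (measurable_pi_apply i).aemeasurable
        (measurable_pi_apply j).aemeasurable))
    simp only [mem_ofPred_eq, Classical.not_imp] at hx
    exact hx.1
  simpa only [Function.Injective, ae_all_iff] using hne

theorem MeasurableEquiv.piCongrLeft_const_apply {ι α : Type*} [MeasurableSpace α] (e : ι ≃ ι)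
    (x : ι → α) : MeasurableEquiv.piCongrLeft (fun _ => α) e x = x ∘ e.symm := by
  ext i
  simp [MeasurableEquiv.piCongrLeft, Equiv.piCongrLeft_apply_eq_cast]

theorem pi_rank_lt_eq_pi_rank_lt {ι α : Type*} [Fintype ι] [DecidableEq ι] [LinearOrder α]
    [MeasurableSpace α] (ν : Measure α) [SigmaFinite ν] (t : ℕ) (i j : ι) :
    Measure.pi (fun _ : ι => ν) {x | rank x i < t} =
      Measure.pi (fun _ : ι => ν) {x | rank x j < t} := by
  rw [← (measurePreserving_piCongrLeft (fun _ => ν) (Equiv.swap i j)).measure_preimage_equiv]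
  congr with x
  simp [MeasurableEquiv.piCongrLeft_const_apply, rank_comp_equiv]

section Measurable

variable {α : Type*} [LinearOrder α] [TopologicalSpace α] [OrderClosedTopology α]
  [SecondCountableTopology α] [MeasurableSpace α] [OpensMeasurableSpace α]

theorem measurable_rank {ι : Type*} [Fintype ι] (i : ι) :
    Measurable fun x : ι → α => rank x i := by
  simp only [rank, card_filter]
  exact Finset.measurable_sum _ fun j _ => Measurable.ite
    (measurableSet_lt (measurable_pi_apply j) (measurable_pi_apply i))
    measurable_const measurable_const

theorem pi_rank_lt_eq_div {n : ℕ} (ν : Measure α) [IsProbabilityMeasure ν]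
    [NullSingletonClass ν] {t : ℕ} (ht : t ≤ n) (i : Fin n) :
    Measure.pi (fun _ => ν) {x | rank x i < t} = t / n := by
  set π := Measure.pi fun _ : Fin n => ν
  have hmeas (k : Fin n) : MeasurableSet {x : Fin n → α | rank x k < t} :=
    measurableSet_lt (measurable_rank k) measurable_const
  have hsum : ∑ k, π {x | rank x k < t} = t := calc
    ∑ k, π {x | rank x k < t} = ∫⁻ x, ∑ k, {x | rank x k < t}.indicator 1 x ∂π := by
        rw [lintegral_finsetSum _ fun k _ => measurable_one.indicator (hmeas k)]
        simp only [lintegral_indicator_one (hmeas _)]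
    _ = ∫⁻ _, (t : ENNReal) ∂π := by
        refine lintegral_congr_ae ((ae_injective_pi ν).mono fun x hx => ?_)
        simp [indicator_apply, sum_boole, card_rank_lt hx, ht]
    _ = t := by simp
  rw [ENNReal.eq_div_iff (Nat.cast_ne_zero.2 (Fin.pos i).ne') (ENNReal.natCast_ne_top n), ← hsum,
    Finset.sum_congr rfl fun k _ => pi_rank_lt_eq_pi_rank_lt ν t k i]
  simp [π]

end Measurable

theorem le_natCeil_mul_div_and_lt {m y : ℝ} (hm : 0 < m) (hy : 0 ≤ y) :
    y ≤ ⌈m * y⌉₊ / m ∧ ⌈m * y⌉₊ / m < y + 1 / m := by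
  have hceil := Nat.ceil_lt_add_one (mul_nonneg hm.le hy)
  rw [le_div_iff₀ hm, div_lt_iff₀ hm, add_mul, one_div_mul_cancel hm.ne']
  exact ⟨by linarith [Nat.le_ceil (m * y)], by linarith⟩

theorem conformal_coverage_iid_exact_general
    {Ω : Type*} [MeasurableSpace Ω] (μ : Measure Ω) [IsProbabilityMeasure μ]
    (N : ℕ) (s : Fin (N + 1) → Ω → ℝ)
    (hmeas : ∀ i, Measurable (s i))
    (hindep : iIndepFun s μ)
    (ν : Measure ℝ) (hident : ∀ i, Measure.map (s i) μ = ν)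
    (hcont : ∀ x : ℝ, ν {x} = 0)
    (α : ℝ) (hα : α ∈ Set.Ioo (0:ℝ) 1)
    (jα : ℕ) (hjα : jα = ⌈((N : ℝ) + 1) * (1 - α)⌉₊) (hjN : jα ≤ N) :
    μ {ω | s (Fin.last N) ω ≤
        orderStat (List.ofFn (fun i : Fin N => s i.castSucc ω)) jα}
      = ENNReal.ofReal ((jα : ℝ) / (N + 1)) ∧
    (1 - α ≤ (jα : ℝ) / (N + 1) ∧ (jα : ℝ) / (N + 1) < 1 - α + 1 / (N + 1)) := by
  have hα1 : 0 < 1 - α := sub_pos.2 hα.2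
  refine ⟨?_, hjα ▸ le_natCeil_mul_div_and_lt (by positivity) hα1.le⟩
  have hj1 : 1 ≤ jα := hjα ▸ Nat.ceil_pos.2 (by positivity)
  have : IsProbabilityMeasure ν :=
    hident 0 ▸ Measure.isProbabilityMeasure_map (hmeas 0).aemeasurable
  have : NullSingletonClass ν := ⟨hcont⟩
  have hlaw : μ.map (fun ω i => s i ω) = Measure.pi fun _ => ν := by
    simp only [(iIndepFun_iff_map_fun_eq_pi_map fun i => (hmeas i).aemeasurable).1 hindep, hident]
  have hevent :
      {ω | s (Fin.last N) ω ≤ orderStat (List.ofFn fun i : Fin N => s i.castSucc ω) jα}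
      = (fun ω i => s i ω) ⁻¹' {x | rank x (Fin.last N) < jα} := by
    ext ω
    simp only [mem_ofPred_eq, Set.mem_preimage, rank_last_eq_countP]
    exact le_orderStat_iff _ _ hj1 (by simpa using hjN)
  rw [hevent, ← Measure.map_apply (measurable_pi_lambda _ hmeas)
    (measurableSet_lt (measurable_rank _) measurable_const), hlaw,
    pi_rank_lt_eq_div ν (hjN.trans N.le_succ), ENNReal.ofReal_div_of_pos (by positivity)]
  norm_cast

/-- Exact conformal coverage for i.i.d. samples with continuous (atomless) distribution. -/
theorem conformal_coverage_iid_exact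
    {Ω : Type*} [MeasurableSpace Ω] (μ : Measure Ω) [IsProbabilityMeasure μ]
    (N : ℕ) (hN : 0 < N) (s : Fin (N + 1) → Ω → ℝ)
    (hmeas : ∀ i, Measurable (s i))
    (hindep : iIndepFun s μ)
    (ν : Measure ℝ) (hident : ∀ i, Measure.map (s i) μ = ν)
    (hcont : ∀ x : ℝ, ν {x} = 0)
    (α : ℝ) (hα : α ∈ Set.Ioo (0:ℝ) 1)
    (jα : ℕ) (hjα : jα = ⌈((N : ℝ) + 1) * (1 - α)⌉₊) (hjN : jα ≤ N) :
    μ {ω | s (Fin.last N) ω ≤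
        orderStat (List.ofFn (fun i : Fin N => s i.castSucc ω)) jα}
      = ENNReal.ofReal ((jα : ℝ) / (N + 1)) ∧
    (1 - α ≤ (jα : ℝ) / (N + 1) ∧ (jα : ℝ) / (N + 1) < 1 - α + 1 / (N + 1)) :=
  conformal_coverage_iid_exact_general μ N s hmeas hindep ν hident hcont α hα jα hjα hjN
end
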